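/- Let q ≥ 2 and n ≥ 1 be integers and let f : (ZMod q)ⁿ → ℝ. Define the Fourier transform f̂(ω) = Σ_{x ∈ (ZMod q)ⁿ} f(x) e^{2πi⟨ω,x⟩/q}, where ⟨ω,x⟩ = Σ_k ω_k x_k ∈ ZMod q. Assume that f̂(ω) is a nonnegative real number for every ω, that f̂(0) > 0, and let C ⊆ (ZMod q)ⁿ be a finite nonempty set such that f(x − y) ≤ 0 for every pair of distinct x, y ∈ C. Then |C| ≤ qⁿ · f(0) / f̂(0). -/

import Mathlib

/-!
Delsarte's linear-programming argument. Put `g(ω) = Σ_{y ∈ C} e(⟨ω, y⟩)`. Fourier inversion gives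
`Σ_ω f̂(ω) |g(ω)|² = qⁿ Σ_{x, y ∈ C} f(x - y)`. As every `f̂(ω)` is nonnegative, the left side is at
least the term `f̂(0) |C|²`; as `f(x - y) ≤ 0` off the diagonal, the right side is at most
`qⁿ |C| f(0)`.
-/

/-- Fourier transform on `(ZMod q)ⁿ`:
`f̂(ω) = Σ_x f(x) e^{2πi⟨ω,x⟩/q}`, with `⟨ω,x⟩ = Σₖ ωₖ xₖ ∈ ZMod q`. -/
noncomputable def fourierZq (q n : ℕ) [NeZero q] (f : (Fin n → ZMod q) → ℝ)
    (ω : Fin n → ZMod q) : ℂ :=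
  ∑ x : Fin n → ZMod q, (f x : ℂ) *
    Complex.exp (2 * Real.pi * Complex.I * ((∑ k, ω k * x k : ZMod q).val : ℂ) / q)

open Finset

lemma AddChar.map_sum_eq_prod {A M ι : Type*} [AddCommMonoid A] [CommMonoid M]
    (ψ : AddChar A M) (s : Finset ι) (a : ι → A) :
    ψ (∑ i ∈ s, a i) = ∏ i ∈ s, ψ (a i) :=
  map_prod ψ.toMonoidHom (fun i ↦ Multiplicative.ofAdd (a i)) s

lemma Finset.sum_sum_apply_sub_le_card_mul {G : Type*} [AddGroup G] (f : G → ℝ) (C : Finset G)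
    (hCf : ∀ x ∈ C, ∀ y ∈ C, x ≠ y → f (x - y) ≤ 0) :
    ∑ x ∈ C, ∑ y ∈ C, f (x - y) ≤ #C * f 0 := by
  classical
  have hrow : ∀ x ∈ C, ∑ y ∈ C, f (x - y) ≤ f 0 := fun x hx ↦ by
    rw [← add_sum_erase C _ hx, sub_self, add_le_iff_nonpos_right]
    exact sum_nonpos fun y hy ↦ hCf x hx y (mem_of_mem_erase hy) (ne_of_mem_erase hy).symm
  simpa using sum_le_sum hrow

namespace AddChar

variable {R : Type*} [CommRing R] [Fintype R] {ι : Type*} [Fintype ι] [DecidableEq ι]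
  {ψ : AddChar R ℂ}

variable (ψ) in
noncomputable def dotProductFourier (f : (ι → R) → ℝ) (ω : ι → R) : ℂ :=
  ∑ x, f x * ψ (ω ⬝ᵥ x)

lemma conj_apply (ψ : AddChar R ℂ) (a : R) : starRingEnd ℂ (ψ a) = ψ (-a) := by
  have hR : 0 < ringChar R := Nat.pos_of_ne_zero (CharP.char_ne_zero_of_finite R _)
  rw [starComp_apply hR, inv_apply]

variable [DecidableEq R]

lemma sum_apply_dotProduct (hψ : ψ.IsPrimitive) (z : ι → R) :
    ∑ ω : ι → R, ψ (ω ⬝ᵥ z) = if z = 0 then (Fintype.card R : ℂ) ^ Fintype.card ι else 0 := by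
  calc ∑ ω : ι → R, ψ (ω ⬝ᵥ z) = ∏ i, ∑ t : R, ψ (t * z i) := by
        simp only [dotProduct, map_sum_eq_prod, Fintype.prod_sum]
    _ = _ := by
        simp only [sum_mulShift _ hψ, Nat.cast_ite, Nat.cast_zero, prod_ite_zero, prod_const,
          card_univ, mem_univ, true_implies, funext_iff, Pi.zero_apply]

lemma sum_dotProductFourier_mul_apply_dotProduct (hψ : ψ.IsPrimitive) (f : (ι → R) → ℝ)
    (w : ι → R) :
    ∑ ω, dotProductFourier ψ f ω * ψ (ω ⬝ᵥ w)
      = (Fintype.card R : ℂ) ^ Fintype.card ι * f (-w) := by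
  calc ∑ ω, dotProductFourier ψ f ω * ψ (ω ⬝ᵥ w)
      = ∑ x, (f x : ℂ) * ∑ ω, ψ (ω ⬝ᵥ (x + w)) := by
        simp only [dotProductFourier, sum_mul, mul_sum, dotProduct_add, map_add_eq_mul, mul_assoc]
        exact sum_comm
    _ = _ := by
        simp only [sum_apply_dotProduct hψ, add_eq_zero_iff_eq_neg, mul_ite, mul_zero,
          sum_ite_eq', mem_univ, if_true, mul_comm]

lemma sum_dotProductFourier_mul_normSq (hψ : ψ.IsPrimitive) (f : (ι → R) → ℝ)
    (C : Finset (ι → R)) :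
    ∑ ω, dotProductFourier ψ f ω * Complex.normSq (∑ y ∈ C, ψ (ω ⬝ᵥ y))
      = (Fintype.card R : ℂ) ^ Fintype.card ι * ∑ x ∈ C, ∑ y ∈ C, f (x - y) := by
  have hnormSq : ∀ ω : ι → R, (Complex.normSq (∑ y ∈ C, ψ (ω ⬝ᵥ y)) : ℂ)
      = ∑ x ∈ C, ∑ y ∈ C, ψ (ω ⬝ᵥ (y - x)) := fun ω ↦ by
    simp only [Complex.normSq_eq_conj_mul_self, map_sum, conj_apply, sum_mul_sum,
      ← map_add_eq_mul, dotProduct_sub, neg_add_eq_sub]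
  calc ∑ ω, dotProductFourier ψ f ω * Complex.normSq (∑ y ∈ C, ψ (ω ⬝ᵥ y))
      = ∑ x ∈ C, ∑ y ∈ C, ∑ ω, dotProductFourier ψ f ω * ψ (ω ⬝ᵥ (y - x)) := by
        simp only [hnormSq, mul_sum]
        rw [sum_comm]
        exact sum_congr rfl fun x _ ↦ sum_comm
    _ = _ := by
        simp only [sum_dotProductFourier_mul_apply_dotProduct hψ, neg_sub, mul_sum,
          Complex.ofReal_sum]

theorem card_mul_re_dotProductFourier_zero_le (hψ : ψ.IsPrimitive) (f : (ι → R) → ℝ)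
    (hnonneg : ∀ ω, 0 ≤ (dotProductFourier ψ f ω).re) (C : Finset (ι → R)) (hC : C.Nonempty)
    (hCf : ∀ x ∈ C, ∀ y ∈ C, x ≠ y → f (x - y) ≤ 0) :
    #C * (dotProductFourier ψ f 0).re ≤ (Fintype.card R : ℝ) ^ Fintype.card ι * f 0 := by
  set N : ℝ := (Fintype.card R : ℝ) ^ Fintype.card ι with hN
  set g : (ι → R) → ℂ := fun ω ↦ ∑ y ∈ C, ψ (ω ⬝ᵥ y)
  have hg_zero : Complex.normSq (g 0) = (#C : ℝ) ^ 2 := by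
    simp [g, sq]
  have hre : ∑ ω, (dotProductFourier ψ f ω).re * Complex.normSq (g ω)
      = N * ∑ x ∈ C, ∑ y ∈ C, f (x - y) := by
    have h := congr_arg Complex.re (sum_dotProductFourier_mul_normSq hψ f C)
    simp only [Complex.re_sum, Complex.re_mul_ofReal] at h
    rw [h, hN]
    norm_cast
  have hquad : #C * (#C * (dotProductFourier ψ f 0).re) ≤ #C * (N * f 0) := by
    calc #C * (#C * (dotProductFourier ψ f 0).re)
        = (dotProductFourier ψ f 0).re * Complex.normSq (g 0) := by
          rw [hg_zero]; ring
      _ ≤ ∑ ω, (dotProductFourier ψ f ω).re * Complex.normSq (g ω) :=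
          single_le_sum (fun ω _ ↦ mul_nonneg (hnonneg ω) (Complex.normSq_nonneg _)) (mem_univ 0)
      _ ≤ N * (#C * f 0) := by
          rw [hre]
          exact mul_le_mul_of_nonneg_left (sum_sum_apply_sub_le_card_mul f C hCf) (by positivity)
      _ = #C * (N * f 0) := by ring
  exact le_of_mul_le_mul_left hquad (by exact_mod_cast hC.card_pos)

end AddChar

lemma fourierZq_eq_dotProductFourier (q n : ℕ) [NeZero q] (f : (Fin n → ZMod q) → ℝ) :
    fourierZq q n f = AddChar.dotProductFourier ZMod.stdAddChar f := by
  ext ω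
  simp only [fourierZq, AddChar.dotProductFourier, ZMod.stdAddChar_apply, ZMod.toCircle_apply,
    dotProduct]

theorem stmt11_general (q n : ℕ) [NeZero q]
    (f : (Fin n → ZMod q) → ℝ)
    (hnonneg : ∀ ω, 0 ≤ (fourierZq q n f ω).re)
    (h0 : 0 < (fourierZq q n f 0).re)
    (C : Finset (Fin n → ZMod q)) (hC : C.Nonempty)
    (hCf : ∀ x ∈ C, ∀ y ∈ C, x ≠ y → f (x - y) ≤ 0) :
    (C.card : ℝ) ≤ (q : ℝ) ^ n * f 0 / (fourierZq q n f 0).re := by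
  rw [le_div_iff₀ h0, fourierZq_eq_dotProductFourier]
  rw [fourierZq_eq_dotProductFourier] at hnonneg
  simpa using AddChar.card_mul_re_dotProductFourier_zero_le (ZMod.isPrimitive_stdAddChar q) f
    hnonneg C hC hCf

theorem stmt11 (q n : ℕ) [NeZero q] (hq : 2 ≤ q) (hn : 1 ≤ n)
    (f : (Fin n → ZMod q) → ℝ)
    (hreal : ∀ ω, (fourierZq q n f ω).im = 0)
    (hnonneg : ∀ ω, 0 ≤ (fourierZq q n f ω).re)
    (h0 : 0 < (fourierZq q n f 0).re)
    (C : Finset (Fin n → ZMod q)) (hC : C.Nonempty)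
    (hCf : ∀ x ∈ C, ∀ y ∈ C, x ≠ y → f (x - y) ≤ 0) :
    (C.card : ℝ) ≤ (q : ℝ) ^ n * f 0 / (fourierZq q n f 0).re :=
  stmt11_general q n f hnonneg h0 C hC hCf
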